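/- The semigroup I^cf_λ is simple, i.e., for all α, β in I^cf_λ there exist γ, δ in I^cf_λ such that γ·α·δ = β; equivalently, I^cf_λ has no proper two-sided ideals. -/

import Mathlib

/-!
As `dom α` is cofinite in the infinite set `λ`, there is a bijection of `λ` onto `dom α`; viewed
as a partial map it is an element `γ` of `I^cf_λ` with full domain and range `dom α`. Then `γα`
is total, hence `(γα)(γα)⁻¹ = 1`, and `δ = (γα)⁻¹β` gives `γαδ = β`.
-/

open Function Set

namespace IcfPaper

variable {ι : Type*}

lemma trans_none_finite {f g : ι ≃. ι}
    (hf : {a | f a = none}.Finite) (hg : {b | g b = none}.Finite) :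
    {a | (f.trans g) a = none}.Finite := by
  have hsub : {a | (f.trans g) a = none} ⊆
      {a | f a = none} ∪ ⋃ b ∈ {b | g b = none}, {a | f.symm b = some a} := by
    intro a ha
    simp only [Set.mem_setOf_eq] at ha
    rcases hfa : f a with _ | b
    · exact Or.inl hfa
    · have hg' : g b = none := by
        have : (f.trans g) a = (f a).bind g := rfl
        rw [this, hfa] at ha
        exact ha
      refine Or.inr ?_
      refine Set.mem_biUnion hg' ?_
      exact (PEquiv.eq_some_iff f).2 hfa
  refine Set.Finite.subset (hf.union (hg.biUnion ?_)) hsub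
  intro b _
  apply Set.Subsingleton.finite
  intro a1 h1 a2 h2
  simp only [Set.mem_setOf_eq] at h1 h2
  rw [h1] at h2
  exact Option.some_injective _ h2

/-- The monoid of injective partial selfmaps of `ι` with cofinite domain and range. -/
def Icf (ι : Type*) : Type _ :=
  {f : ι ≃. ι // {a | f a = none}.Finite ∧ {b | f.symm b = none}.Finite}

namespace Icf

instance : Monoid (Icf ι) where
  mul f g := ⟨f.1.trans g.1, trans_none_finite f.2.1 g.2.1, by
      rw [PEquiv.symm_trans_rev]
      exact trans_none_finite g.2.2 f.2.2⟩
  one := ⟨PEquiv.refl ι, by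
      constructor <;>
      · convert Set.finite_empty
        ext a
        simp only [Set.mem_setOf_eq, Set.mem_empty_iff_false, iff_false]
        intro h
        first | exact Option.some_ne_none a h | simp at h⟩
  mul_assoc a b c := Subtype.ext (PEquiv.trans_assoc _ _ _)
  one_mul a := Subtype.ext (PEquiv.refl_trans _)
  mul_one a := Subtype.ext (PEquiv.trans_refl _)

/-- The domain of an element of `Icf ι`. -/
def dom (f : Icf ι) : Set ι := {a | (f.1 a).isSome}

/-- The range of an element of `Icf ι`. -/
def ran (f : Icf ι) : Set ι := {b | (f.1.symm b).isSome}

/-- `d̄ f`, the number of points of `ι` outside of the domain of `f`. -/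
noncomputable def dbar (f : Icf ι) : ℕ := (dom f)ᶜ.ncard

/-- `r̄ f`, the number of points of `ι` outside of the range of `f`. -/
noncomputable def rbar (f : Icf ι) : ℕ := (ran f)ᶜ.ncard

end Icf

/-- The bicyclic semigroup `⟨p, q | pq = 1⟩`, realized as `ℕ × ℕ` with the operation
`(a,b)(c,d) = (a - b + max(b,c), d - c + max(b,c))`. -/
def Bicyclic : Type := ℕ × ℕ

instance : Mul Bicyclic :=
  ⟨fun x y => (x.1 - x.2 + max x.2 y.1, y.2 - y.1 + max x.2 y.1)⟩

section

variable {α : Type*} (s : Set α) [DecidablePred (· ∈ s)]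

def subtypeValPEquiv : s ≃. α where
  toFun a := some a
  invFun b := if h : b ∈ s then some ⟨b, h⟩ else none
  inv a b := by
    by_cases hb : b ∈ s
    · simp [hb, Subtype.ext_iff, eq_comm]
    · simp only [hb, dite_false, reduceCtorEq, false_iff]
      rintro ⟨⟩
      exact hb a.2

variable {s}

lemma subtypeValPEquiv_symm_apply_of_mem {b : α} (hb : b ∈ s) :
    (subtypeValPEquiv s).symm b = some ⟨b, hb⟩ := dif_pos hb

end

lemma exists_equiv_of_compl_finite [Infinite ι] {s : Set ι} (hs : sᶜ.Finite) :
    Nonempty (ι ≃ s) := by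
  have hcard : Cardinal.mk (sᶜᶜ : Set ι) = Cardinal.mk ι :=
    Cardinal.mk_compl_of_infinite sᶜ (hs.lt_aleph0.trans_le (Cardinal.aleph0_le_mk ι))
  rw [compl_compl] at hcard
  exact (Cardinal.eq.1 hcard).map Equiv.symm

namespace Icf

instance : Inv (Icf ι) := ⟨fun f => ⟨f.1.symm, f.2.2, f.2.1⟩⟩

lemma mul_inv_eq_one_of_forall_isSome {f : Icf ι} (h : ∀ a, (f.1 a).isSome) :
    f * f⁻¹ = 1 :=
  Subtype.ext (PEquiv.trans_symm_eq_iff_forall_isSome.2 h)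

lemma dom_compl_finite (f : Icf ι) : (dom f)ᶜ.Finite := by
  simpa [dom, Set.compl_ofPred] using f.2.1

open Classical in
noncomputable def ofEquivSubset {s : Set ι} (hs : sᶜ.Finite) (e : ι ≃ s) : Icf ι :=
  ⟨e.toPEquiv.trans (subtypeValPEquiv s),
    Set.finite_empty.subset fun _ h => Option.some_ne_none _ h,
    hs.subset fun b hb hbs => by
      change ((subtypeValPEquiv s).symm b).bind e.toPEquiv.symm = none at hb
      simp [subtypeValPEquiv_symm_apply_of_mem hbs, ← Equiv.toPEquiv_symm] at hb⟩

lemma exists_mul_forall_isSome [Infinite ι] (f : Icf ι) :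
    ∃ g : Icf ι, ∀ a, ((g * f).1 a).isSome := by
  obtain ⟨e⟩ := exists_equiv_of_compl_finite f.dom_compl_finite
  -- `(ofEquivSubset _ e * f) a` unfolds to `f (e a)`, and `e a ∈ dom f`
  exact ⟨ofEquivSubset f.dom_compl_finite e, fun a => (e a).2⟩

end Icf

/-- The semigroup `Icf ι` is simple: for all `α β` there are `γ δ` with `γ·α·δ = β`. -/
theorem statement0 {ι : Type*} [Infinite ι] (α β : Icf ι) :
    ∃ γ δ : Icf ι, γ * α * δ = β := by
  obtain ⟨γ, hγ⟩ := Icf.exists_mul_forall_isSome α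
  refine ⟨γ, (γ * α)⁻¹ * β, ?_⟩
  rw [← mul_assoc, Icf.mul_inv_eq_one_of_forall_isSome hγ, one_mul]

end IcfPaper
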